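/- Let N be a 3-connected matroid that has no 4-element fan. Let M be a 3-connected matroid having N as a minor, and let F be a 4-element fan of M. Then |F ∩ E(N)| ≤ 3. -/

import Mathlib

open Matroid Set

namespace ExMinors

variable {α β γ : Type}

/-! ### Basic matroid notions -/

/-- The (extended, `ℕ∞`-valued) rank of a set `X` in a matroid `M`: the supremum of the
cardinalities of independent subsets of `X`. -/
noncomputable def eRank (M : Matroid α) (X : Set α) : ℕ∞ :=
  ⨆ I ∈ {I | M.Indep I ∧ I ⊆ X}, I.encard

/-- `(A, B)` is a 2-separation of `M`: a partition of the ground set into two parts of size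
at least two with `r A + r B ≤ r M + 1`. -/
def TwoSep (M : Matroid α) (A B : Set α) : Prop :=
  A ∪ B = M.E ∧ Disjoint A B ∧ 2 ≤ A.encard ∧ 2 ≤ B.encard ∧
    eRank M A + eRank M B ≤ eRank M M.E + 1

/-- `C` is a circuit of `M` : a minimal dependent set. -/
def IsCircuitM (M : Matroid α) (C : Set α) : Prop :=
  C ⊆ M.E ∧ ¬ M.Indep C ∧ ∀ x ∈ C, M.Indep (C \ {x})

/-- A matroid is connected if it is nonempty and every two distinct elements of the
ground set lie on a common circuit. -/
def ConnectedM (M : Matroid α) : Prop :=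
  M.E.Nonempty ∧ ∀ e ∈ M.E, ∀ f ∈ M.E, e = f ∨ ∃ C, IsCircuitM M C ∧ e ∈ C ∧ f ∈ C

/-- A matroid is 3-connected if it is connected and has no 2-separation. -/
def ThreeConnected (M : Matroid α) : Prop :=
  ConnectedM M ∧ ∀ A B, ¬ TwoSep M A B

/-- A matroid is simple if every subset of the ground set with at most two elements
is independent. -/
def SimpleM (M : Matroid α) : Prop :=
  ∀ e ∈ M.E, ∀ f ∈ M.E, M.Indep {e, f}

def CosimpleM (M : Matroid α) : Prop := SimpleM M✶

/-! ### Minors -/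

/-- Deletion of the set `D` from `M`. -/
def del (M : Matroid α) (D : Set α) : Matroid α := M ↾ (M.E \ D)

/-- Contraction of the set `C` in `M`, defined by duality. -/
def con (M : Matroid α) (C : Set α) : Matroid α := (del M✶ C)✶

/-- `N` is a minor of `M`. -/
def IsMinor (N M : Matroid α) : Prop := ∃ C D : Set α, N = del (con M C) D

/-! ### Isomorphism -/

/-- `φ` is an isomorphism from `M` to `N`: a bijection between the ground sets which
preserves independence. -/
def MIsoVia (M : Matroid α) (N : Matroid β) (φ : α → β) : Prop :=
  Set.BijOn φ M.E N.E ∧ ∀ I ⊆ M.E, (M.Indep I ↔ N.Indep (φ '' I))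

/-- `M` and `N` are isomorphic matroids. -/
def MIso (M : Matroid α) (N : Matroid β) : Prop := ∃ φ, MIsoVia M N φ

/-- `φ` is an automorphism of `M`. -/
def IsAuto (M : Matroid α) (φ : α → α) : Prop := MIsoVia M M φ

/-- `M` has a minor isomorphic to the matroid `N`. -/
def HasMinorIso (M : Matroid α) (N : Matroid β) : Prop :=
  ∃ N' : Matroid α, IsMinor N' M ∧ MIso N' N

/-! ### Representations -/

/-- `M` is the matroid on ground set `range g` (with `g` injective) represented by the
family of column vectors `cols`. -/
def ReppedBy {ι F : Type} [Field F] {n : ℕ} (M : Matroid α) (cols : ι → Fin n → F)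
    (g : ι → α) : Prop :=
  Function.Injective g ∧ M.E = Set.range g ∧
    ∀ J : Set ι, (M.Indep (g '' J) ↔ LinearIndependent F (J.restrict cols))

/-- `M` is isomorphic to the matroid of the `k` columns `cols` over the field `F`. -/
def IsColM {F : Type} [Field F] {k n : ℕ} (cols : Fin k → Fin n → F) (M : Matroid α) : Prop :=
  ∃ g : Fin k → α, ReppedBy M cols g

/-- `M` is representable over the field `F` (by vectors in some finite power of `F`). -/
def RepOver (F : Type) [Field F] (M : Matroid α) : Prop :=
  ∃ (n : ℕ) (v : α → Fin n → F), ∀ I ⊆ M.E, (M.Indep I ↔ LinearIndependent F (I.restrict v))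

/-! ### Named matroids -/

/-- `M` is isomorphic to the uniform matroid `U_{m,n}`. -/
def IsUniform (m n : ℕ) (M : Matroid α) : Prop :=
  M.E.Finite ∧ M.E.ncard = n ∧ ∀ I ⊆ M.E, (M.Indep I ↔ I.ncard ≤ m)

/-- The columns of a `GF(2)`-representation of the Fano matroid `F₇`. -/
def fanoCols : Fin 7 → Fin 3 → ZMod 2 :=
  ![![1,0,0], ![0,1,0], ![0,0,1], ![0,1,1], ![1,0,1], ![1,1,0], ![1,1,1]]

/-- `M` is isomorphic to the Fano matroid `F₇`. -/
def IsF7 (M : Matroid α) : Prop := IsColM fanoCols M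

/-- `M` is isomorphic to `F₇*`. -/
def IsF7dual (M : Matroid α) : Prop := IsF7 M✶

/-- The columns of a `GF(3)`-representation of the non-Fano matroid `F₇⁻`. -/
def nonFanoCols : Fin 7 → Fin 3 → ZMod 3 :=
  ![![1,0,0], ![0,1,0], ![0,0,1], ![0,1,1], ![1,0,1], ![1,1,0], ![1,1,1]]

/-- `M` is isomorphic to the non-Fano matroid `F₇⁻`. -/
def IsNonFano (M : Matroid α) : Prop := IsColM nonFanoCols M

/-- `M` is isomorphic to `(F₇⁻)*`. -/
def IsNonFanoDual (M : Matroid α) : Prop := IsNonFano M✶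

/-- The columns `[I₄ | A₈]` of the `GF(3)`-representation of `P₈`. -/
def p8Cols : Fin 8 → Fin 4 → ZMod 3 :=
  ![![1,0,0,0], ![0,1,0,0], ![0,0,1,0], ![0,0,0,1],
    ![0,1,1,-1], ![1,0,1,1], ![1,1,0,1], ![-1,1,1,0]]

/-- `M` is isomorphic to `P₈`. -/
def IsP8 (M : Matroid α) : Prop := IsColM p8Cols M

/-- `M` is isomorphic to `P₆`: rank 3, six elements, whose only non-spanning circuit is a
single 3-point line. -/
def IsP6 (M : Matroid α) : Prop :=
  M.E.Finite ∧ M.E.ncard = 6 ∧ ∃ T ⊆ M.E, T.ncard = 3 ∧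
    ∀ I ⊆ M.E, (M.Indep I ↔ I.ncard ≤ 3 ∧ I ≠ T)

/-- The columns of a `GF(3)`-representation of `AG(2,3)`: the nine points `(1, x, y)`. -/
def ag23Cols : Fin 9 → Fin 3 → ZMod 3 :=
  fun j => ![1, ((j : ℕ) % 3 : ZMod 3), ((j : ℕ) / 3 : ZMod 3)]

/-- `M` is isomorphic to the ternary affine plane `AG(2,3)`. -/
def IsAG23 (M : Matroid α) : Prop := IsColM ag23Cols M

/-- The columns of a `GF(3)`-representation of `AG(2,3)\e` (one point deleted). -/
def agdeCols : Fin 8 → Fin 3 → ZMod 3 :=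
  fun j => ![1, ((j : ℕ) % 3 : ZMod 3), ((j : ℕ) / 3 : ZMod 3)]

/-- `M` is isomorphic to `AG(2,3)\e`. -/
def IsAGde (M : Matroid α) : Prop := IsColM agdeCols M

/-- `M` is isomorphic to `(AG(2,3)\e)*`. -/
def IsAGdeDual (M : Matroid α) : Prop := IsAGde M✶

/-- The columns `[I₄ | A]` of the `GF(3)`-representation of `Δ₃(AG(2,3)\e)`, where `A` has
rows `(1,0,-1,0), (1,0,1,1), (1,1,0,1), (0,1,1,-1)`. -/
def deltaAGCols : Fin 8 → Fin 4 → ZMod 3 :=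
  ![![1,0,0,0], ![0,1,0,0], ![0,0,1,0], ![0,0,0,1],
    ![1,1,1,0], ![0,0,1,1], ![-1,1,0,1], ![0,1,1,-1]]

/-- `M` is isomorphic to `Δ₃(AG(2,3)\e)`. -/
def IsDeltaAG (M : Matroid α) : Prop := IsColM deltaAGCols M

/-- `X` is a circuit-hyperplane of `M`. -/
def IsCircuitHyperplane (M : Matroid α) (X : Set α) : Prop :=
  IsCircuitM M X ∧ M.IsFlat X ∧ eRank M X + 1 = eRank M M.E

/-- `M` is isomorphic to `P₈⁼`, obtained from `P₈` by relaxing its two disjoint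
circuit-hyperplanes. -/
def IsP8eq (M : Matroid α) : Prop :=
  ∃ (N : Matroid α) (X Y : Set α), IsP8 N ∧ N.E = M.E ∧
    IsCircuitHyperplane N X ∧ IsCircuitHyperplane N Y ∧ Disjoint X Y ∧
    ∀ B ⊆ M.E, (M.IsBase B ↔ (N.IsBase B ∨ B = X ∨ B = Y))

/-- `M` is isomorphic to the Steiner-system matroid `S(5,6,12)`: a rank-6 paving matroid on
12 elements whose circuit-hyperplanes are the blocks of an `S(5,6,12)` Steiner system. -/
def IsSteiner (M : Matroid α) : Prop :=
  ∃ Bl : Set (Set α), M.E.Finite ∧ M.E.ncard = 12 ∧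
    (∀ b ∈ Bl, b ⊆ M.E ∧ b.ncard = 6) ∧
    (∀ s ⊆ M.E, s.ncard = 5 → ∃! b, b ∈ Bl ∧ s ⊆ b) ∧
    (∀ I ⊆ M.E, (M.Indep I ↔ I.ncard ≤ 6 ∧ I ∉ Bl))

/-! ### Excluded-minor classes and superfluous subsets -/

/-- The class of (finite) matroids on `ℕ` having no minor isomorphic to `P i` for `i ∈ S`. -/
def ExClass {k : ℕ} (P : Fin k → Matroid ℕ → Prop) (S : Finset (Fin k)) : Set (Matroid ℕ) :=
  {M | M.E.Finite ∧ ∀ i ∈ S, ¬ ∃ N, IsMinor N M ∧ P i N}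

/-- With `P` listing the excluded minors of a class, the subset `E'` of the excluded minors
is superfluous if `ex(E − E') − ex(E)` contains only finitely many 3-connected matroids up
to isomorphism. -/
def Superfluous {k : ℕ} (P : Fin k → Matroid ℕ → Prop) (E' : Finset (Fin k)) : Prop :=
  ∃ L : List (Matroid ℕ),
    ∀ M ∈ ExClass P (Finset.univ \ E') \ ExClass P Finset.univ,
      ThreeConnected M → ∃ N ∈ L, MIso M N

/-! ### Lines, triangles, triads and fans -/

/-- `L` is a 3-point line of `M`: a rank-2 flat with exactly three elements. -/
def IsLine3 (M : Matroid α) (L : Set α) : Prop :=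
  M.IsFlat L ∧ eRank M L = 2 ∧ L.encard = 3

/-- A triangle is a 3-element circuit. -/
def IsTriangle (M : Matroid α) (T : Set α) : Prop := IsCircuitM M T ∧ T.encard = 3

/-- A triad is a 3-element cocircuit. -/
def IsTriad (M : Matroid α) (T : Set α) : Prop := IsCircuitM M✶ T ∧ T.encard = 3

/-- `(x 1, …, x k)` is a fan of `M`: an ordered sequence of distinct elements of the ground
set such that each three consecutive elements form a triangle or a triad, and triangles and
triads alternate. -/
def IsFan (M : Matroid α) (k : ℕ) (x : ℕ → α) : Prop :=
  3 ≤ k ∧ Set.InjOn x (Set.Icc 1 k) ∧ (∀ i, 1 ≤ i → i ≤ k → x i ∈ M.E) ∧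
  ∀ i, 1 ≤ i → i + 2 ≤ k →
    ((IsTriangle M {x i, x (i+1), x (i+2)} ∨ IsTriad M {x i, x (i+1), x (i+2)}) ∧
      (i + 3 ≤ k →
        (IsTriangle M {x i, x (i+1), x (i+2)} → IsTriad M {x (i+1), x (i+2), x (i+3)}) ∧
        (IsTriad M {x i, x (i+1), x (i+2)} → IsTriangle M {x (i+1), x (i+2), x (i+3)})))

/-! ### Full closure -/

/-- The full closure of `X`: the intersection of all sets containing `X` that are closed in
both `M` and `M✶`. -/
def Fcl (M : Matroid α) (X : Set α) : Set α :=
  ⋂₀ {Y | X ⊆ Y ∧ M.closure Y = Y ∧ M✶.closure Y = Y}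

/-! ### Wheels and generalized parallel connections -/

/-- The columns of the standard `ℚ`-representation of the rank-`n` wheel `W_n`:
spoke `i` is `e_i`, and rim element `i` is `e_i - e_{i+1}` (indices mod `n`). -/
noncomputable def wheelCols (n : ℕ) : Fin n ⊕ Fin n → Fin n → ℚ
  | .inl i => Pi.single i 1
  | .inr i => Pi.single i 1 - Pi.single ⟨((i : ℕ) + 1) % n, Nat.mod_lt _ i.pos⟩ 1

/-- `W` is a copy of the rank-`n` wheel, with spokes `s 1, …, s n` and rim elements
`r 1, …, r n`, so that `{s i, r i, s (i+1)}` is a triangle and `{r i, s (i+1), r (i+1)}` is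
a triad (indices mod `n`). -/
def IsWheel (W : Matroid α) (n : ℕ) (s r : ℕ → α) : Prop :=
  ReppedBy W (wheelCols n)
    (Sum.elim (fun i : Fin n => s ((i : ℕ) + 1)) (fun i : Fin n => r ((i : ℕ) + 1)))

/-- `P` is the generalized parallel connection of `W` and `M` (over the common restriction
`W.E ∩ M.E`, assumed to be a modular flat of `W`), characterized by its flats:
`F` is a flat of `P` iff `F ∩ W.E` is a flat of `W` and `F ∩ M.E` is a flat of `M`. -/
def IsGPC (W M P : Matroid α) : Prop :=
  P.E = W.E ∪ M.E ∧ ∀ F ⊆ P.E, (P.IsFlat F ↔ W.IsFlat (F ∩ W.E) ∧ M.IsFlat (F ∩ M.E))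

/-- `L = Λ_T^n(M)` for the triangle `T = {x₁, x₂, x₃}` of `M` : the generalized parallel
connection of the wheel `W_n` with `M`, where `s 1, r n, s n` of `W_n` are relabelled
`x₁, x₂, x₃`, with `x₂` deleted. -/
def IsLambdaExt (M : Matroid α) (x₁ x₂ x₃ : α) (n : ℕ) (L : Matroid α) : Prop :=
  ∃ (W P : Matroid α) (s r : ℕ → α), IsWheel W n s r ∧
    s 1 = x₁ ∧ r n = x₂ ∧ s n = x₃ ∧ W.E ∩ M.E = {x₁, x₂, x₃} ∧
    IsGPC W M P ∧ L = del P {x₂}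

/-- `D = Δ_T(M)`, the `Δ-Y` exchange of `M` on the coindependent triangle
`T = {x₁, x₂, x₃}`: the generalized parallel connection of `M(K₄) = W₃` with `M` across
`T`, with `T` deleted. -/
def IsDeltaY (M : Matroid α) (x₁ x₂ x₃ : α) (D : Matroid α) : Prop :=
  ∃ (W P : Matroid α) (s r : ℕ → α), IsWheel W 3 s r ∧
    s 1 = x₁ ∧ r 3 = x₂ ∧ s 3 = x₃ ∧ W.E ∩ M.E = {x₁, x₂, x₃} ∧
    IsGPC W M P ∧ D = del P {x₁, x₂, x₃}

/-- The columns `[I₃ | A]` of the `GF(3)`-representation of the matroid `M₈`, where `A` has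
rows `(1,1,0,1,0), (1,0,1,1,1), (0,1,1,1,-1)`. -/
def m8Cols : Fin 8 → Fin 3 → ZMod 3 :=
  ![![1,0,0], ![0,1,0], ![0,0,1], ![1,1,0], ![1,0,1], ![0,1,1], ![1,1,1], ![0,1,-1]]

/-!
Once all four elements of the fan lie in `E(N)`, the 3-connected matroid `N`, which then has at
least four elements, is simple and cosimple: a dependent or codependent pair `A` would give the
2-separation `(A, E(N) - A)`. A triangle of `M` inside `E(N)` stays dependent in the minor `N`,
and its pairs are independent in `N`, so it is a triangle of `N`; dually for triads. Hence the
fan of `M` is a fan of `N`, possibly after reversal: a triple that is both a triangle and a triad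
of `N` may break the alternation in one direction but not in the other.
-/

theorem _root_.Matroid.IsMinor.dual {N M : Matroid α} (h : N ≤m M) : N✶ ≤m M✶ := by
  obtain ⟨C, D, rfl⟩ := h
  rw [dual_contract_delete, delete_contract_comm']
  exact contract_delete_isMinor _ _ _

theorem _root_.Matroid.eRk_add_one_le_eRank_of_not_spanning {M : Matroid α} {X : Set α}
    (hX : ¬ M.Spanning X) (hXE : X ⊆ M.E) : M.eRk X + 1 ≤ M.eRank := by
  obtain ⟨I, hI⟩ := M.exists_isBasis X
  have hIB : ¬ M.IsBase I := fun hB => hX (hB.spanning.superset hI.subset)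
  obtain ⟨B, hB⟩ := M.exists_isBase
  obtain ⟨e, he, heI⟩ := hI.indep.exists_insert_of_not_isBase hIB hB
  rw [← hI.encard_eq_eRk, ← encard_insert_of_notMem he.2]
  exact heI.encard_le_eRank

lemma isMinor_iff {N M : Matroid α} : IsMinor N M ↔ N ≤m M := Iff.rfl

lemma eRank_eq_eRk (M : Matroid α) (X : Set α) : eRank M X = M.eRk X :=
  le_antisymm (iSup₂_le fun _ hI => hI.1.encard_le_eRk_of_subset hI.2)
    (eRk_le_iff.2 fun _ hIX hI => le_biSup _ ⟨hI, hIX⟩)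

section TwoSep

variable {M : Matroid α} {A : Set α}

lemma twoSep_sdiff_of_encard_eq_two (h4 : 4 ≤ M.E.encard) (hA : A ⊆ M.E) (hA2 : A.encard = 2)
    (hr : M.eRk A + M.eRk (M.E \ A) ≤ M.eRank + 1) : TwoSep M A (M.E \ A) := by
  refine ⟨union_sdiff_cancel hA, disjoint_sdiff_right, hA2.ge, ?_, ?_⟩
  · rw [← encard_sdiff_add_encard_of_subset hA, hA2, show (4 : ℕ∞) = 2 + 2 by norm_num] at h4
    exact (ENat.add_le_add_iff_right (by norm_num)).1 h4
  · rwa [eRank_eq_eRk, eRank_eq_eRk, eRank_eq_eRk, eRk_ground]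

lemma indep_of_encard_eq_two (hM : ∀ A B, ¬ TwoSep M A B) (h4 : 4 ≤ M.E.encard)
    (hA : A ⊆ M.E) (hA2 : A.encard = 2) : M.Indep A := by
  by_contra hdep
  have hr : M.eRk A ≤ 1 := by
    have h := M.eRk_lt_encard_of_dep_of_finite (finite_of_encard_eq_coe hA2) ⟨hdep, hA⟩
    rw [hA2] at h
    exact Order.le_of_lt_add_one h
  refine hM A (M.E \ A) (twoSep_sdiff_of_encard_eq_two h4 hA hA2 ?_)
  calc M.eRk A + M.eRk (M.E \ A) ≤ 1 + M.eRank := add_le_add hr (M.eRk_le_eRank _)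
    _ = M.eRank + 1 := add_comm _ _

lemma coindep_of_encard_eq_two (hM : ∀ A B, ¬ TwoSep M A B) (h4 : 4 ≤ M.E.encard)
    (hA : A ⊆ M.E) (hA2 : A.encard = 2) : M✶.Indep A := by
  by_contra hdep
  have hB : M.eRk (M.E \ A) + 1 ≤ M.eRank :=
    eRk_add_one_le_eRank_of_not_spanning (by rwa [← coindep_iff_compl_spanning]) sdiff_subset
  have hA' : M.eRk A ≤ 2 := hA2 ▸ M.eRk_le_encard A
  refine hM A (M.E \ A) (twoSep_sdiff_of_encard_eq_two h4 hA hA2 ?_)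
  refine (ENat.add_le_add_iff_right ENat.one_ne_top).1 ?_
  calc M.eRk A + M.eRk (M.E \ A) + 1 = M.eRk A + (M.eRk (M.E \ A) + 1) := add_assoc _ _ _
    _ ≤ 2 + M.eRank := add_le_add hA' hB
    _ = M.eRank + 1 + 1 := by ring

lemma simpleM_of_indep_of_encard_eq_two (h2 : 2 ≤ M.E.encard)
    (h : ∀ A ⊆ M.E, A.encard = 2 → M.Indep A) : SimpleM M := by
  intro e he f hf
  have hef : ({e, f} : Set α).encard ≤ 2 :=
    (encard_insert_le _ _).trans_eq (by rw [encard_singleton, one_add_one_eq_two])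
  obtain ⟨A, hefA, hAE, hA2⟩ := exists_superset_subset_encard_eq (pair_subset he hf) hef h2
  exact (h A hAE hA2).subset hefA

lemma simpleM_of_forall_not_twoSep (hM : ∀ A B, ¬ TwoSep M A B) (h4 : 4 ≤ M.E.encard) :
    SimpleM M :=
  simpleM_of_indep_of_encard_eq_two (le_trans (by norm_num) h4)
    fun _ hA hA2 => indep_of_encard_eq_two hM h4 hA hA2

lemma cosimpleM_of_forall_not_twoSep (hM : ∀ A B, ¬ TwoSep M A B) (h4 : 4 ≤ M.E.encard) :
    CosimpleM M :=
  simpleM_of_indep_of_encard_eq_two (le_trans (by norm_num) h4)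
    fun _ hA hA2 => coindep_of_encard_eq_two hM h4 hA hA2

end TwoSep

lemma IsTriangle.of_isMinor {N M : Matroid α} {T : Set α} (hNM : N ≤m M) (hN : SimpleM N)
    (hT : IsTriangle M T) (hTN : T ⊆ N.E) : IsTriangle N T := by
  refine ⟨⟨hTN, fun hI => hT.1.2.1 (hI.of_isMinor hNM), fun x hx => ?_⟩, hT.2⟩
  have hcard : (T \ {x}).encard = 2 := by
    rw [encard_sdiff_singleton_of_mem hx, hT.2]; rfl
  obtain ⟨e, f, -, hef⟩ := encard_eq_two.1 hcard
  have he : e ∈ T \ {x} := hef ▸ mem_insert e {f}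
  have hf : f ∈ T \ {x} := hef ▸ mem_insert_of_mem e rfl
  exact hef ▸ hN e (hTN he.1) f (hTN hf.1)

lemma IsTriad.of_isMinor {N M : Matroid α} {T : Set α} (hNM : N ≤m M) (hN : CosimpleM N)
    (hT : IsTriad M T) (hTN : T ⊆ N.E) : IsTriad N T :=
  IsTriangle.of_isMinor hNM.dual hN hT hTN

lemma isFan_four_iff (M : Matroid α) (x : ℕ → α) :
    IsFan M 4 x ↔ InjOn x (Icc 1 4) ∧ (∀ i, 1 ≤ i → i ≤ 4 → x i ∈ M.E) ∧
      (IsTriangle M {x 1, x 2, x 3} ∨ IsTriad M {x 1, x 2, x 3}) ∧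
      (IsTriangle M {x 1, x 2, x 3} → IsTriad M {x 2, x 3, x 4}) ∧
      (IsTriad M {x 1, x 2, x 3} → IsTriangle M {x 2, x 3, x 4}) := by
  refine ⟨fun ⟨_, hinj, hE, h⟩ => ⟨hinj, hE, (h 1 le_rfl (by norm_num)).1,
      ((h 1 le_rfl (by norm_num)).2 le_rfl).1, ((h 1 le_rfl (by norm_num)).2 le_rfl).2⟩,
    fun ⟨hinj, hE, hT, himp₁, himp₂⟩ => ⟨by norm_num, hinj, hE, fun i hi1 hi2 => ?_⟩⟩
  obtain rfl | rfl : i = 1 ∨ i = 2 := by omega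
  · exact ⟨hT, fun _ => ⟨himp₁, himp₂⟩⟩
  · exact ⟨(hT.imp himp₁ himp₂).symm, fun h => absurd h (by norm_num)⟩

lemma insert_insert_singleton_comm (a b c : α) : ({a, b, c} : Set α) = {c, b, a} := by
  rw [pair_comm b c, insert_comm a c, pair_comm a b]

lemma injOn_Icc_one_four_reverse {x : ℕ → α} (hx : InjOn x (Icc 1 4)) :
    InjOn (fun i => x (5 - i)) (Icc 1 4) := fun i hi j hj h => by
  have := hx (by simp only [mem_Icc] at hi ⊢; omega) (by simp only [mem_Icc] at hj ⊢; omega) h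
  simp only [mem_Icc] at hi hj
  omega

lemma exists_isFan_four_of_triangle_triad {M : Matroid α} {x : ℕ → α}
    (hx : InjOn x (Icc 1 4)) (hE : ∀ i, 1 ≤ i → i ≤ 4 → x i ∈ M.E)
    (hT : IsTriangle M {x 1, x 2, x 3}) (hT' : IsTriad M {x 2, x 3, x 4}) :
    ∃ z, IsFan M 4 z := by
  by_cases hrev : IsTriad M {x 1, x 2, x 3} ∧ ¬ IsTriangle M {x 2, x 3, x 4}
  · refine ⟨fun i => x (5 - i), (isFan_four_iff M _).2 ⟨injOn_Icc_one_four_reverse hx,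
      fun i hi1 hi4 => hE _ (by omega) (by omega), ?_⟩⟩
    simp only [Nat.reduceSub]
    rw [insert_insert_singleton_comm (x 4), insert_insert_singleton_comm (x 3)]
    exact ⟨Or.inr hT', fun h => absurd h hrev.2, fun _ => hT⟩
  · exact ⟨x, (isFan_four_iff M x).2
      ⟨hx, hE, Or.inl hT, fun _ => hT', not_and_not_right.1 hrev⟩⟩

lemma exists_isFan_four_of_triad_triangle {M : Matroid α} {x : ℕ → α}
    (hx : InjOn x (Icc 1 4)) (hE : ∀ i, 1 ≤ i → i ≤ 4 → x i ∈ M.E)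
    (hT : IsTriad M {x 1, x 2, x 3}) (hT' : IsTriangle M {x 2, x 3, x 4}) :
    ∃ z, IsFan M 4 z := by
  refine exists_isFan_four_of_triangle_triad (x := fun i => x (5 - i))
    (injOn_Icc_one_four_reverse hx) (fun i hi1 hi4 => hE _ (by omega) (by omega)) ?_ ?_
  · simpa only [Nat.reduceSub, ← insert_insert_singleton_comm] using hT'
  · simpa only [Nat.reduceSub, ← insert_insert_singleton_comm] using hT

lemma image_Icc_one_four (y : ℕ → α) : y '' Icc 1 4 = {y 1, y 2, y 3, y 4} := by
  ext a
  simp only [mem_image, mem_Icc, mem_insert_iff, mem_singleton_iff]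
  constructor
  · rintro ⟨i, ⟨hi1, hi4⟩, rfl⟩
    interval_cases i <;> simp
  · rintro (rfl | rfl | rfl | rfl) <;> exact ⟨_, by norm_num, rfl⟩

lemma encard_inter_lt_of_not_subset {S T : Set α} (hS : S.Finite) (hST : ¬ S ⊆ T) :
    (S ∩ T).encard < S.encard :=
  (hS.subset inter_subset_left).encard_lt_encard
    (inter_subset_left.ssubset_of_ne fun h => hST (h ▸ inter_subset_right))

theorem statement17_general {α : Type} (N M : Matroid α)
    (h3N : ThreeConnected N) (hNfan : ¬ ∃ y : ℕ → α, IsFan N 4 y)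
    (hNM : IsMinor N M)
    (y : ℕ → α) (hfan : IsFan M 4 y) :
    (({y 1, y 2, y 3, y 4} : Set α) ∩ N.E).encard ≤ 3 := by
  obtain ⟨hinj, -, hT, himp₁, himp₂⟩ := (isFan_four_iff M y).1 hfan
  have hF : ({y 1, y 2, y 3, y 4} : Set α).encard = 4 := by
    rw [← image_Icc_one_four, hinj.encard_image, encard_eq_coe_toFinset_card]
    simp
  by_cases hFN : ({y 1, y 2, y 3, y 4} : Set α) ⊆ N.E
  swap
  · exact Order.le_of_lt_add_one ((encard_inter_lt_of_not_subset (toFinite _) hFN).trans_eq hF)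
  have h4 : 4 ≤ N.E.encard := hF ▸ encard_le_encard hFN
  have hyN : ∀ i, 1 ≤ i → i ≤ 4 → y i ∈ N.E := fun i hi1 hi4 =>
    hFN (image_Icc_one_four y ▸ mem_image_of_mem y ⟨hi1, hi4⟩)
  have hT₁N : {y 1, y 2, y 3} ⊆ N.E := subset_trans
    (insert_subset_insert (insert_subset_insert (singleton_subset_iff.2 (mem_insert _ _)))) hFN
  have hT₂N : {y 2, y 3, y 4} ⊆ N.E := subset_trans (subset_insert _ _) hFN
  have hsimple := simpleM_of_forall_not_twoSep h3N.2 h4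
  have hcosimple := cosimpleM_of_forall_not_twoSep h3N.2 h4
  rw [isMinor_iff] at hNM
  refine absurd ?_ hNfan
  rcases hT with hT | hT
  · exact exists_isFan_four_of_triangle_triad hinj hyN (hT.of_isMinor hNM hsimple hT₁N)
      ((himp₁ hT).of_isMinor hNM hcosimple hT₂N)
  · exact exists_isFan_four_of_triad_triangle hinj hyN (hT.of_isMinor hNM hcosimple hT₁N)
      ((himp₂ hT).of_isMinor hNM hsimple hT₂N)

/-- If `N` is a 3-connected matroid with no 4-element fan, `M` is a 3-connected matroid
having `N` as a minor, and `F` is a 4-element fan of `M`, then `|F ∩ E(N)| ≤ 3`. -/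
theorem statement17 {α : Type} (N M : Matroid α)
    (h3N : ThreeConnected N) (hNfan : ¬ ∃ y : ℕ → α, IsFan N 4 y)
    (hfin : M.E.Finite) (h3M : ThreeConnected M) (hNM : IsMinor N M)
    (y : ℕ → α) (hfan : IsFan M 4 y) :
    (({y 1, y 2, y 3, y 4} : Set α) ∩ N.E).encard ≤ 3 :=
  statement17_general N M h3N hNfan hNM y hfan

end ExMinors
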